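/- Let p > 0 and q > 0 with q ≠ 1, and let s, θ̃ ∈ ℝ. Let (u, v) be a positive classical solution of the Lane–Emden system −Δu = v^p, −Δv = u^q on ℝ^n. Then for every nonnegative φ ∈ C_c²(ℝ^n): μ₃ ∫ u^q v^{s−1} |∇v|² φ ≥ −(1/(q−1)) ∫ u^{q−1} v^{p+s+1} φ + μ₄ ∫ u^{2q} v^s φ + I₅, where μ₃ = [(s + θ̃q)(s + θ̃(q−2) + 1) + θ̃(θ̃−1)q]/(q(q−1)), μ₄ = (2θ̃(q−1) + s + 1)/(q(q−1)), and I₅ = (1/(q−1)) ∫ u^{q−1} v^{s+1} (∇u·∇φ) − ((2θ̃(q−1) + s + 1)/(q(q−1))) ∫ u^q v^s (∇v·∇φ), all integrals being over ℝ^n. -/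

import Mathlib

/-!
Test `-Δv = u^q` against `u^q v^s φ` and `-Δu = v^p` against `u^(q-1) v^(s+1) φ`. After
integrating by parts, each identity expresses one source integral through the three integrals
`∫ u^q v^(s-1) |∇v|² φ`, `∫ u^(q-1) v^s ∇u·∇v φ`, `∫ u^(q-2) v^(s+1) |∇u|² φ` and a boundary
term carrying `∇φ`. Eliminating the source integrals, the difference of the two sides of the
estimate is `θ̃² ∫ u^q v^(s-1) |∇v|² φ - 2θ̃ ∫ u^(q-1) v^s ∇u·∇v φ + ∫ u^(q-2) v^(s+1) |∇u|² φ`,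
which is `∫ u^(q-2) v^(s-1) |θ̃ u ∇v - v ∇u|² φ ≥ 0`.
-/

open MeasureTheory Real
open scoped InnerProductSpace

/-- The Laplacian of a function `f : ℝⁿ → ℝ`, as the sum of its second partial
derivatives. -/
noncomputable def lap {n : ℕ} (f : EuclideanSpace ℝ (Fin n) → ℝ)
    (x : EuclideanSpace ℝ (Fin n)) : ℝ :=
  ∑ i : Fin n, fderiv ℝ (fun y => fderiv ℝ f y (EuclideanSpace.single i 1)) x
    (EuclideanSpace.single i 1)

theorem Continuous.integrable_mul_of_hasCompactSupport {X : Type*} [TopologicalSpace X]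
    [MeasurableSpace X] [OpensMeasurableSpace X] {μ : Measure X} [IsFiniteMeasureOnCompacts μ]
    {g φ : X → ℝ} (hg : Continuous g) (hφ : Continuous φ) (hφc : HasCompactSupport φ) :
    Integrable (fun x => g x * φ x) μ :=
  (hg.mul hφ).integrable_of_hasCompactSupport hφc.mul_left

section InnerProductSpace

variable {F : Type*} [NormedAddCommGroup F] [InnerProductSpace ℝ F]

theorem HasCompactSupport.inner_right {α : Type*} [TopologicalSpace α] {f g : α → F}
    (hg : HasCompactSupport g) : HasCompactSupport fun x => ⟪f x, g x⟫_ℝ :=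
  hg.mono fun x hx h => hx (by simp [h])

theorem rpow_mul_rpow_mul_norm_smul_sub_smul_sq {y z : ℝ} (hy : 0 < y) (hz : 0 < z)
    (a b θ : ℝ) (Y Z : F) :
    y ^ (a - 2) * z ^ (b - 1) * ‖(θ * y) • Z - z • Y‖ ^ 2
      = θ ^ 2 * (y ^ a * z ^ (b - 1) * ‖Z‖ ^ 2) - 2 * θ * (y ^ (a - 1) * z ^ b * ⟪Y, Z⟫_ℝ)
        + y ^ (a - 2) * z ^ (b + 1) * ‖Y‖ ^ 2 := by
  have hya : y ^ a = y ^ (a - 2) * y * y := by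
    rw [← rpow_add_one hy.ne', ← rpow_add_one hy.ne']; ring_nf
  have hya' : y ^ (a - 1) = y ^ (a - 2) * y := by
    rw [← rpow_add_one hy.ne']; ring_nf
  have hzb : z ^ (b + 1) = z ^ (b - 1) * z * z := by
    rw [← rpow_add_one hz.ne', ← rpow_add_one hz.ne']; ring_nf
  have hzb' : z ^ b = z ^ (b - 1) * z := by
    rw [← rpow_add_one hz.ne']; ring_nf
  rw [norm_sub_sq_real, norm_smul, norm_smul, real_inner_smul_left, real_inner_smul_right,
    Real.norm_eq_abs, Real.norm_eq_abs, mul_pow, mul_pow, sq_abs, sq_abs, real_inner_comm Y,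
    hya, hya', hzb, hzb']
  ring

variable [CompleteSpace F]

theorem ContDiff.continuous_gradient {f : F → ℝ} (hf : ContDiff ℝ 1 f) :
    Continuous (gradient f) :=
  (InnerProductSpace.toDual ℝ F).symm.continuous.comp (hf.continuous_fderiv one_ne_zero)

theorem HasCompactSupport.gradient {f : F → ℝ} (hf : HasCompactSupport f) :
    HasCompactSupport (gradient f) :=
  (hf.fderiv (𝕜 := ℝ)).comp_left (map_zero (InnerProductSpace.toDual ℝ F).symm)

end InnerProductSpace

section Euclidean

variable {n : ℕ}

local notation "E" => EuclideanSpace ℝ (Fin n)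
local notation "e" i => EuclideanSpace.single i (1 : ℝ)

theorem inner_gradient_eq_sum (f g : E → ℝ) (x : E) :
    ⟪gradient f x, gradient g x⟫_ℝ = ∑ i, fderiv ℝ f x (e i) * fderiv ℝ g x (e i) := by
  rw [PiLp.inner_apply]
  refine Finset.sum_congr rfl fun i _ => ?_
  rw [← inner_gradient_left, ← inner_gradient_left (𝕜 := ℝ), EuclideanSpace.inner_single_right,
    EuclideanSpace.inner_single_right]
  simp [mul_comm]

theorem integral_inner_gradient_eq_integral_mul_neg_lap {f ψ : E → ℝ} (hf : ContDiff ℝ 2 f)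
    (hψ : ContDiff ℝ 1 ψ) (hψc : HasCompactSupport ψ) :
    ∫ x, ⟪gradient f x, gradient ψ x⟫_ℝ = ∫ x, ψ x * -lap f x := by
  have hdf : ∀ i, ContDiff ℝ 1 fun y => fderiv ℝ f y (e i) := fun i =>
    (hf.fderiv_right le_rfl).clm_apply contDiff_const
  have hψ_d2f : ∀ i, Integrable fun x => ψ x * fderiv ℝ (fun y => fderiv ℝ f y (e i)) x (e i) :=
    fun i => (hψ.continuous.mul (((hdf i).continuous_fderiv one_ne_zero).clm_apply
      continuous_const)).integrable_of_hasCompactSupport hψc.mul_right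
  have hdψ_df : ∀ i, Integrable fun x => fderiv ℝ ψ x (e i) * fderiv ℝ f x (e i) :=
    fun i => ((((hψ.continuous_fderiv one_ne_zero).clm_apply continuous_const).mul
      (hdf i).continuous).integrable_of_hasCompactSupport
      ((hψc.fderiv_apply (𝕜 := ℝ) _).mul_right))
  have hparts : ∀ i, ∫ x, ψ x * fderiv ℝ (fun y => fderiv ℝ f y (e i)) x (e i)
      = -∫ x, fderiv ℝ ψ x (e i) * fderiv ℝ f x (e i) := fun i =>
    integral_mul_fderiv_eq_neg_fderiv_mul_of_integrable (hdψ_df i) (hψ_d2f i)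
      ((hψ.continuous.mul (hdf i).continuous).integrable_of_hasCompactSupport hψc.mul_right)
      (fun x _ => hψ.differentiable one_ne_zero x)
      (fun x _ => (hdf i).differentiable one_ne_zero x)
  simp only [real_inner_comm (gradient ψ _) (gradient f _), inner_gradient_eq_sum, lap,
    Finset.mul_sum, mul_neg, integral_neg]
  rw [integral_finsetSum _ fun i _ => hdψ_df i, integral_finsetSum _ fun i _ => hψ_d2f i]
  simp only [hparts, Finset.sum_neg_distrib, neg_neg]

theorem inner_gradient_rpow_mul_rpow_mul {u v φ f : E → ℝ} {x : E}
    (hu : DifferentiableAt ℝ u x) (hv : DifferentiableAt ℝ v x) (hφ : DifferentiableAt ℝ φ x)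
    (hux : u x ≠ 0) (hvx : v x ≠ 0) (a b : ℝ) :
    ⟪gradient f x, gradient (fun y => u y ^ a * v y ^ b * φ y) x⟫_ℝ
      = a * (u x ^ (a - 1) * v x ^ b * ⟪gradient u x, gradient f x⟫_ℝ * φ x)
        + b * (u x ^ a * v x ^ (b - 1) * ⟪gradient v x, gradient f x⟫_ℝ * φ x)
        + u x ^ a * v x ^ b * ⟪gradient f x, gradient φ x⟫_ℝ := by
  have H : HasFDerivAt (fun y => u y ^ a * v y ^ b * φ y) _ x :=
    ((hu.hasFDerivAt.rpow_const (p := a) (Or.inl hux)).mul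
      (hv.hasFDerivAt.rpow_const (p := b) (Or.inl hvx))).mul hφ.hasFDerivAt
  rw [real_inner_comm, real_inner_comm (gradient φ x), inner_gradient_left, H.fderiv]
  simp only [inner_gradient_left, add_apply, smul_apply, smul_eq_mul, Pi.mul_apply]
  ring

theorem integral_rpow_mul_rpow_mul_neg_lap {u v φ f : E → ℝ} (hf : ContDiff ℝ 2 f)
    (hu : ContDiff ℝ 1 u) (hv : ContDiff ℝ 1 v) (hu0 : ∀ x, u x ≠ 0) (hv0 : ∀ x, v x ≠ 0)
    (hφ : ContDiff ℝ 1 φ) (hφc : HasCompactSupport φ) (a b : ℝ) :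
    ∫ x, u x ^ a * v x ^ b * φ x * -lap f x
      = a * (∫ x, u x ^ (a - 1) * v x ^ b * ⟪gradient u x, gradient f x⟫_ℝ * φ x)
        + b * (∫ x, u x ^ a * v x ^ (b - 1) * ⟪gradient v x, gradient f x⟫_ℝ * φ x)
        + ∫ x, u x ^ a * v x ^ b * ⟪gradient f x, gradient φ x⟫_ℝ := by
  have hw (c d : ℝ) : ContDiff ℝ 1 fun x => u x ^ c * v x ^ d :=
    (hu.rpow_const_of_ne hu0).mul (hv.rpow_const_of_ne hv0)
  have hgf := (hf.of_le one_le_two).continuous_gradient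
  rw [← integral_inner_gradient_eq_integral_mul_neg_lap hf ((hw a b).mul hφ) hφc.mul_left]
  simp only [inner_gradient_rpow_mul_rpow_mul (hu.differentiable one_ne_zero _)
    (hv.differentiable one_ne_zero _) (hφ.differentiable one_ne_zero _) (hu0 _) (hv0 _)]
  have h1 : Integrable fun x => u x ^ (a - 1) * v x ^ b * ⟪gradient u x, gradient f x⟫_ℝ * φ x :=
    ((hw _ _).continuous.mul (hu.continuous_gradient.inner hgf)).integrable_mul_of_hasCompactSupport
      hφ.continuous hφc
  have h2 : Integrable fun x => u x ^ a * v x ^ (b - 1) * ⟪gradient v x, gradient f x⟫_ℝ * φ x :=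
    ((hw _ _).continuous.mul (hv.continuous_gradient.inner hgf)).integrable_mul_of_hasCompactSupport
      hφ.continuous hφc
  have h3 : Integrable fun x => u x ^ a * v x ^ b * ⟪gradient f x, gradient φ x⟫_ℝ :=
    (hw _ _).continuous.integrable_mul_of_hasCompactSupport
      (hgf.inner hφ.continuous_gradient) hφc.gradient.inner_right
  rw [integral_add _ h3, integral_add (h1.const_mul a) (h2.const_mul b), integral_const_mul,
    integral_const_mul]
  exact (h1.const_mul a).add (h2.const_mul b)

theorem integral_quadratic_form_nonneg {u v φ : E → ℝ} (hu : ContDiff ℝ 1 u)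
    (hv : ContDiff ℝ 1 v) (hu0 : ∀ x, 0 < u x) (hv0 : ∀ x, 0 < v x) (hφ : Continuous φ)
    (hφc : HasCompactSupport φ) (hφ0 : ∀ x, 0 ≤ φ x) (a b θ : ℝ) :
    0 ≤ θ ^ 2 * (∫ x, u x ^ a * v x ^ (b - 1) * ‖gradient v x‖ ^ 2 * φ x)
      - 2 * θ * (∫ x, u x ^ (a - 1) * v x ^ b * ⟪gradient u x, gradient v x⟫_ℝ * φ x)
      + ∫ x, u x ^ (a - 2) * v x ^ (b + 1) * ‖gradient u x‖ ^ 2 * φ x := by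
  have hw (c d : ℝ) : Continuous fun x => u x ^ c * v x ^ d :=
    ((hu.rpow_const_of_ne fun x => (hu0 x).ne').mul
      (hv.rpow_const_of_ne fun x => (hv0 x).ne')).continuous
  have hI : Integrable fun x => u x ^ a * v x ^ (b - 1) * ‖gradient v x‖ ^ 2 * φ x :=
    ((hw _ _).mul (hv.continuous_gradient.norm.pow 2)).integrable_mul_of_hasCompactSupport hφ hφc
  have hA : Integrable fun x => u x ^ (a - 1) * v x ^ b * ⟪gradient u x, gradient v x⟫_ℝ * φ x :=
    Continuous.integrable_mul_of_hasCompactSupport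
      ((hw _ _).mul (hu.continuous_gradient.inner hv.continuous_gradient)) hφ hφc
  have hB : Integrable fun x => u x ^ (a - 2) * v x ^ (b + 1) * ‖gradient u x‖ ^ 2 * φ x :=
    ((hw _ _).mul (hu.continuous_gradient.norm.pow 2)).integrable_mul_of_hasCompactSupport hφ hφc
  have hsq : ∀ x, u x ^ (a - 2) * v x ^ (b - 1)
        * ‖(θ * u x) • gradient v x - v x • gradient u x‖ ^ 2 * φ x
      = θ ^ 2 * (u x ^ a * v x ^ (b - 1) * ‖gradient v x‖ ^ 2 * φ x)
        - 2 * θ * (u x ^ (a - 1) * v x ^ b * ⟪gradient u x, gradient v x⟫_ℝ * φ x)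
        + u x ^ (a - 2) * v x ^ (b + 1) * ‖gradient u x‖ ^ 2 * φ x := fun x => by
    rw [rpow_mul_rpow_mul_norm_smul_sub_smul_sq (hu0 x) (hv0 x)]
    ring
  calc 0 ≤ ∫ x, u x ^ (a - 2) * v x ^ (b - 1)
        * ‖(θ * u x) • gradient v x - v x • gradient u x‖ ^ 2 * φ x :=
      integral_nonneg fun x => by have := hu0 x; have := hv0 x; have := hφ0 x; positivity
    _ = _ := by
      simp only [hsq]
      rw [integral_add _ hB, integral_sub (hI.const_mul _) (hA.const_mul _), integral_const_mul,
        integral_const_mul]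
      exact (hI.const_mul _).sub (hA.const_mul _)

end Euclidean

theorem key_estimates_general (n : ℕ) (p q s θ' : ℝ) (hq : 0 < q)
    (hq1 : q ≠ 1)
    (u v : EuclideanSpace ℝ (Fin n) → ℝ)
    (hu : ContDiff ℝ 2 u) (hv : ContDiff ℝ 2 v)
    (hu0 : ∀ x, 0 < u x) (hv0 : ∀ x, 0 < v x)
    (hue : ∀ x, -lap u x = v x ^ p) (hve : ∀ x, -lap v x = u x ^ q)
    (φ : EuclideanSpace ℝ (Fin n) → ℝ) (hφ : ContDiff ℝ 2 φ)
    (hφc : HasCompactSupport φ) (hφ0 : ∀ x, 0 ≤ φ x) :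
    ((s + θ' * q) * (s + θ' * (q - 2) + 1) + θ' * (θ' - 1) * q) / (q * (q - 1)) *
        (∫ x, u x ^ q * v x ^ (s - 1) * ‖gradient v x‖ ^ 2 * φ x)
    ≥ -(1 / (q - 1)) * (∫ x, u x ^ (q - 1) * v x ^ (p + s + 1) * φ x)
      + (2 * θ' * (q - 1) + s + 1) / (q * (q - 1)) *
        (∫ x, u x ^ (2 * q) * v x ^ s * φ x)
      + ((1 / (q - 1)) *
          (∫ x, u x ^ (q - 1) * v x ^ (s + 1) *
            ⟪gradient u x, gradient φ x⟫_ℝ)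
        - (2 * θ' * (q - 1) + s + 1) / (q * (q - 1)) *
          (∫ x, u x ^ q * v x ^ s * ⟪gradient v x, gradient φ x⟫_ℝ)) := by
  have hu1 : ContDiff ℝ 1 u := hu.of_le one_le_two
  have hv1 : ContDiff ℝ 1 v := hv.of_le one_le_two
  have hφ1 : ContDiff ℝ 1 φ := hφ.of_le one_le_two
  have hu0' x := (hu0 x).ne'
  have hv0' x := (hv0 x).ne'
  have htest_v := integral_rpow_mul_rpow_mul_neg_lap hv hu1 hv1 hu0' hv0' hφ1 hφc q s
  have htest_u := integral_rpow_mul_rpow_mul_neg_lap hu hu1 hv1 hu0' hv0' hφ1 hφc (q - 1) (s + 1)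
  have hsq := integral_quadratic_form_nonneg hu1 hv1 hu0 hv0 hφ.continuous hφc hφ0 q s θ'
  have hsrc_v : ∀ x, u x ^ q * v x ^ s * φ x * -lap v x = u x ^ (2 * q) * v x ^ s * φ x :=
    fun x => by rw [hve, two_mul, rpow_add (hu0 x)]; ring
  have hsrc_u : ∀ x, u x ^ (q - 1) * v x ^ (s + 1) * φ x * -lap u x
      = u x ^ (q - 1) * v x ^ (p + s + 1) * φ x :=
    fun x => by rw [hue, show p + s + 1 = s + 1 + p by ring, rpow_add (hv0 x) (s + 1)]; ring
  simp only [hsrc_v, hsrc_u, real_inner_self_eq_norm_sq, sub_sub, one_add_one_eq_two,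
    add_sub_cancel_right, real_inner_comm (gradient u _) (gradient v _)] at htest_v htest_u
  have hq0 : q ≠ 0 := hq.ne'
  have hq1' : q - 1 ≠ 0 := sub_ne_zero.mpr hq1
  rw [ge_iff_le, ← sub_nonneg]
  convert hsq using 1
  rw [htest_v, htest_u]
  field_simp
  ring

theorem key_estimates (n : ℕ) (p q s θ' : ℝ) (hp : 0 < p) (hq : 0 < q)
    (hq1 : q ≠ 1)
    (u v : EuclideanSpace ℝ (Fin n) → ℝ)
    (hu : ContDiff ℝ 2 u) (hv : ContDiff ℝ 2 v)
    (hu0 : ∀ x, 0 < u x) (hv0 : ∀ x, 0 < v x)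
    (hue : ∀ x, -lap u x = v x ^ p) (hve : ∀ x, -lap v x = u x ^ q)
    (φ : EuclideanSpace ℝ (Fin n) → ℝ) (hφ : ContDiff ℝ 2 φ)
    (hφc : HasCompactSupport φ) (hφ0 : ∀ x, 0 ≤ φ x) :
    ((s + θ' * q) * (s + θ' * (q - 2) + 1) + θ' * (θ' - 1) * q) / (q * (q - 1)) *
        (∫ x, u x ^ q * v x ^ (s - 1) * ‖gradient v x‖ ^ 2 * φ x)
    ≥ -(1 / (q - 1)) * (∫ x, u x ^ (q - 1) * v x ^ (p + s + 1) * φ x)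
      + (2 * θ' * (q - 1) + s + 1) / (q * (q - 1)) *
        (∫ x, u x ^ (2 * q) * v x ^ s * φ x)
      + ((1 / (q - 1)) *
          (∫ x, u x ^ (q - 1) * v x ^ (s + 1) *
            ⟪gradient u x, gradient φ x⟫_ℝ)
        - (2 * θ' * (q - 1) + s + 1) / (q * (q - 1)) *
          (∫ x, u x ^ q * v x ^ s * ⟪gradient v x, gradient φ x⟫_ℝ)) :=
  key_estimates_general n p q s θ' hq hq1 u v hu hv hu0 hv0 hue hve φ hφ hφc hφ0
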